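/- arXiv:2005.00230 — 5 statements merged into one kernel-verified Lean document; each statement's English description precedes it below -/
import Mathlib

section
/- Let p, q ∈ ℝ ∪ {±∞} with p + q ≥ 0 (where +∞ + (-∞) is interpreted as 0). Define ℓ = pq/(p+q) if p + q ≠ 0, ℓ = -∞ if p + q = 0 and (p,q) ≠ (0,0), and ℓ = 0 if (p,q) = (0,0). Then for all a, b, c, d ∈ [0,∞) and λ ∈ [0,1], M_p(a,b;λ) · M_q(c,d;λ) ≥ M_ℓ(ac, bd; λ). -/
open Set MeasureTheory

/-- The `p`-th mean `M_p(a,b;λ)` for an extended-real parameter `p`. -/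
noncomputable def pMean (p : EReal) (a b lam : ℝ) : ℝ :=
  if a * b = 0 then 0
  else if p = ⊤ then max a b
  else if p = ⊥ then min a b
  else if p = 0 then a ^ (1 - lam) * b ^ lam
  else ((1 - lam) * a ^ p.toReal + lam * b ^ p.toReal) ^ p.toReal⁻¹

/-- The `α`-th power mean of positive reals (geometric mean when `α = 0`). -/
noncomputable def tMean (α t₀ t₁ lam : ℝ) : ℝ :=
  if α = 0 then t₀ ^ (1 - lam) * t₁ ^ lam
  else ((1 - lam) * t₀ ^ α + lam * t₁ ^ α) ^ α⁻¹

/-- The sum `p + q`, with the convention `⊤ + ⊥ = ⊥ + ⊤ = 0`. -/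
noncomputable def sumPQ (p q : EReal) : EReal :=
  if (p = ⊤ ∧ q = ⊥) ∨ (p = ⊥ ∧ q = ⊤) then 0 else p + q

/-- The exponent `ℓ = pq/(p+q)` with the conventions of the
Borell–Brascamp–Lieb theory. -/
noncomputable def ellOf (p q : EReal) : EReal :=
  if p = 0 ∧ q = 0 then 0
  else if (p = ⊤ ∧ q = ⊥) ∨ (p = ⊥ ∧ q = ⊤) then ⊥
  else if p = ⊤ then q
  else if q = ⊤ then p
  else if p = ⊥ ∨ q = ⊥ then ⊥
  else if p + q = 0 then ⊥
  else ((p.toReal * q.toReal / (p.toReal + q.toReal) : ℝ) : EReal)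


/-!
For real `p, q ≠ 0` with `p + q > 0` the claim is Hölder's inequality for two-point means.
Scaling reduces it to `M_p(a, b) = M_q(c, d) = 1`, and then it is the weighted average of the
Young-type inequality `(xy)^ℓ / ℓ ≤ x^p / p + y^q / q`, valid for either sign of `ℓ = pq/(p+q)`.
If `ℓ = 0`, one exponent vanishes and the other is nonnegative; the geometric mean is
multiplicative and lies below every `M_r` with `r ≥ 0`. If `q = -p ≠ 0`, then `ℓ = -∞`, and
`min(ac, bd) ≤ M_p(a, b) M_{-p}(c, d)` follows from `M_p(1/c, 1/d) = 1 / M_{-p}(c, d)`.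
If `q = +∞`, then `ℓ = p`, and `M_p(ac, bd) ≤ max(c, d) M_p(a, b)` by monotonicity and
homogeneity.
-/

section PowerMean

variable {α a b c d x y x' y' lam : ℝ}

lemma weighted_rpow_pos (hx : 0 < x) (hy : 0 < y) (h0 : 0 ≤ lam) (h1 : lam ≤ 1) :
    0 < (1 - lam) * x ^ α + lam * y ^ α := by
  have hxα : 0 < x ^ α := Real.rpow_pos_of_pos hx α
  have hyα : 0 < y ^ α := Real.rpow_pos_of_pos hy α
  nlinarith [mul_nonneg h0 hyα.le, mul_nonneg (sub_nonneg.2 h1) hxα.le, mul_pos hxα hyα]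

lemma tMean_of_ne_zero (hα : α ≠ 0) (x y lam : ℝ) :
    tMean α x y lam = ((1 - lam) * x ^ α + lam * y ^ α) ^ α⁻¹ := if_neg hα

lemma tMean_zero (x y lam : ℝ) : tMean 0 x y lam = x ^ (1 - lam) * y ^ lam := if_pos rfl

lemma tMean_pos (hx : 0 < x) (hy : 0 < y) (h0 : 0 ≤ lam) (h1 : lam ≤ 1) :
    0 < tMean α x y lam := by
  unfold tMean
  split_ifs
  · positivity
  · exact Real.rpow_pos_of_pos (weighted_rpow_pos hx hy h0 h1) _

lemma tMean_rpow_self (hα : α ≠ 0) (hx : 0 < x) (hy : 0 < y) (h0 : 0 ≤ lam) (h1 : lam ≤ 1) :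
    tMean α x y lam ^ α = (1 - lam) * x ^ α + lam * y ^ α := by
  rw [tMean_of_ne_zero hα, Real.rpow_inv_rpow (weighted_rpow_pos hx hy h0 h1).le hα]

lemma tMean_mono (hx : 0 < x) (hy : 0 < y) (hxx : x ≤ x') (hyy : y ≤ y') (h0 : 0 ≤ lam)
    (h1 : lam ≤ 1) : tMean α x y lam ≤ tMean α x' y' lam := by
  have hx' : 0 < x' := hx.trans_le hxx
  have hy' : 0 < y' := hy.trans_le hyy
  unfold tMean
  split_ifs with hα
  · gcongr
  rcases lt_or_gt_of_ne hα with hneg | hpos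
  · apply Real.rpow_le_rpow_of_nonpos (weighted_rpow_pos hx' hy' h0 h1) _ (inv_nonpos.2 hneg.le)
    gcongr ?_ + ?_
    · exact mul_le_mul_of_nonneg_left (Real.rpow_le_rpow_of_nonpos hx hxx hneg.le) (by linarith)
    · exact mul_le_mul_of_nonneg_left (Real.rpow_le_rpow_of_nonpos hy hyy hneg.le) h0
  · gcongr

lemma tMean_const_mul {M : ℝ} (hM : 0 < M) (hx : 0 < x) (hy : 0 < y) (h0 : 0 ≤ lam)
    (h1 : lam ≤ 1) : tMean α (M * x) (M * y) lam = M * tMean α x y lam := by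
  unfold tMean
  split_ifs with hα
  · rw [Real.mul_rpow hM.le hx.le, Real.mul_rpow hM.le hy.le]
    calc M ^ (1 - lam) * x ^ (1 - lam) * (M ^ lam * y ^ lam)
        = M ^ (1 - lam + lam) * (x ^ (1 - lam) * y ^ lam) := by rw [Real.rpow_add hM]; ring
      _ = M * (x ^ (1 - lam) * y ^ lam) := by rw [sub_add_cancel, Real.rpow_one]
  · rw [Real.mul_rpow hM.le hx.le, Real.mul_rpow hM.le hy.le,
      show (1 - lam) * (M ^ α * x ^ α) + lam * (M ^ α * y ^ α)
        = M ^ α * ((1 - lam) * x ^ α + lam * y ^ α) by ring,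
      Real.mul_rpow (by positivity) (weighted_rpow_pos hx hy h0 h1).le,
      Real.rpow_rpow_inv hM.le hα]

lemma tMean_inv_inv (hx : 0 < x) (hy : 0 < y) (h0 : 0 ≤ lam) (h1 : lam ≤ 1) :
    tMean α x⁻¹ y⁻¹ lam = (tMean (-α) x y lam)⁻¹ := by
  unfold tMean
  simp only [neg_eq_zero, Real.inv_rpow hx.le, Real.inv_rpow hy.le]
  split_ifs with hα
  · rw [mul_inv]
  · rw [← Real.rpow_neg hx.le, ← Real.rpow_neg hy.le, inv_neg,
      Real.rpow_neg (weighted_rpow_pos hx hy h0 h1).le, inv_inv]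

lemma tMean_zero_mul (ha : 0 < a) (hb : 0 < b) (hc : 0 < c) (hd : 0 < d) (lam : ℝ) :
    tMean 0 (a * c) (b * d) lam = tMean 0 a b lam * tMean 0 c d lam := by
  simp only [tMean_zero, Real.mul_rpow ha.le hc.le, Real.mul_rpow hb.le hd.le]
  ring

lemma tMean_zero_le (hα : 0 ≤ α) (hx : 0 < x) (hy : 0 < y) (h0 : 0 ≤ lam) (h1 : lam ≤ 1) :
    tMean 0 x y lam ≤ tMean α x y lam := by
  rcases hα.eq_or_lt with rfl | hα
  · rfl
  have amgm := Real.geom_mean_le_arith_mean2_weighted (sub_nonneg.2 h1) h0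
    (Real.rpow_nonneg hx.le α) (Real.rpow_nonneg hy.le α) (sub_add_cancel 1 lam)
  rw [tMean_zero, tMean_of_ne_zero hα.ne',
    ← Real.rpow_le_rpow_iff (by positivity) (by positivity) hα,
    Real.rpow_inv_rpow (weighted_rpow_pos hx hy h0 h1).le hα.ne',
    Real.mul_rpow (by positivity) (by positivity), ← Real.rpow_mul hx.le, ← Real.rpow_mul hy.le,
    mul_comm (1 - lam), mul_comm lam, Real.rpow_mul hx.le, Real.rpow_mul hy.le]
  exact amgm

lemma young_of_add_pos_of_neg {p q : ℝ} (hp : 0 < p) (hq : q < 0) (hpq : 0 < p + q)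
    (hx : 0 < x) (hy : 0 < y) :
    (x * y) ^ (p * q / (p + q)) / (p * q / (p + q)) ≤ x ^ p / p + y ^ q / q := by
  set ℓ := p * q / (p + q)
  have hℓ : ℓ < 0 := div_neg_of_neg_of_pos (mul_neg_of_pos_of_neg hp hq) hpq
  have hq0 : q ≠ 0 := hq.ne
  have amgm := Real.geom_mean_le_arith_mean2_weighted (div_nonneg_of_nonpos hq.le hℓ.le)
    (div_nonneg (neg_nonneg.2 hq.le) hp.le) (Real.rpow_nonneg (mul_pos hx hy).le ℓ)
    (Real.rpow_nonneg hx.le p) (by simp only [ℓ]; field_simp; ring)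
  rw [← Real.rpow_mul (by positivity), ← Real.rpow_mul hx.le, mul_div_cancel₀ _ hℓ.ne,
    mul_div_cancel₀ _ hp.ne', Real.mul_rpow hx.le hy.le, mul_right_comm, ← Real.rpow_add hx,
    add_neg_cancel, Real.rpow_zero, one_mul] at amgm
  have key : (q / ℓ * (x * y) ^ ℓ + -q / p * x ^ p) / q ≤ y ^ q / q :=
    div_le_div_of_nonpos_of_le hq.le amgm
  rw [add_div, show q / ℓ * (x * y) ^ ℓ / q = (x * y) ^ ℓ / ℓ by field_simp,
    show -q / p * x ^ p / q = -(x ^ p / p) by field_simp] at key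
  linarith

/-- For `ℓ < 0` this is a reverse Young inequality, turned around by the division by `ℓ`. Both
cases are weighted AM–GM: for `p, q > 0` applied to `x^p, y^q`, for `q < 0` applied to `(xy)^ℓ`
and `x^p`, whose weighted geometric mean is `y^q`. -/
theorem young_of_add_pos {p q : ℝ} (hp : p ≠ 0) (hq : q ≠ 0) (hpq : 0 < p + q)
    (hx : 0 < x) (hy : 0 < y) :
    (x * y) ^ (p * q / (p + q)) / (p * q / (p + q)) ≤ x ^ p / p + y ^ q / q := by
  rcases lt_or_gt_of_ne hp with hp | hp
  · rw [mul_comm x, mul_comm p, add_comm p, add_comm (x ^ p / p)]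
    exact young_of_add_pos_of_neg (by linarith) hp (by linarith) hy hx
  rcases lt_or_gt_of_ne hq with hq | hq
  · exact young_of_add_pos_of_neg hp hq hpq hx hy
  set ℓ := p * q / (p + q)
  have hℓ : 0 < ℓ := by positivity
  have amgm := Real.geom_mean_le_arith_mean2_weighted (div_nonneg hℓ.le hp.le)
    (div_nonneg hℓ.le hq.le) (Real.rpow_nonneg hx.le p) (Real.rpow_nonneg hy.le q)
    (by simp only [ℓ]; field_simp; ring)
  rw [← Real.rpow_mul hx.le, ← Real.rpow_mul hy.le, mul_div_cancel₀ _ hp.ne',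
    mul_div_cancel₀ _ hq.ne', ← Real.mul_rpow hx.le hy.le] at amgm
  calc (x * y) ^ ℓ / ℓ ≤ (ℓ / p * x ^ p + ℓ / q * y ^ q) / ℓ := by gcongr
    _ = x ^ p / p + y ^ q / q := by field_simp

lemma rpow_inv_le_one_of_div_le_one_div {ℓ U : ℝ} (hℓ : ℓ ≠ 0) (hU : 0 < U)
    (h : U / ℓ ≤ 1 / ℓ) : U ^ ℓ⁻¹ ≤ 1 := by
  rcases lt_or_gt_of_ne hℓ with hneg | hpos
  · exact Real.rpow_le_one_of_one_le_of_nonpos ((div_le_div_right_of_neg hneg).1 h)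
      (inv_nonpos.2 hneg.le)
  · exact Real.rpow_le_one hU.le ((div_le_div_iff_of_pos_right hpos).1 h) (inv_nonneg.2 hpos.le)

variable {p q : ℝ}

lemma tMean_mul_le_one (hp : p ≠ 0) (hq : q ≠ 0) (hpq : 0 < p + q) (ha : 0 < a) (hb : 0 < b)
    (hc : 0 < c) (hd : 0 < d) (h0 : 0 ≤ lam) (h1 : lam ≤ 1) (hab : tMean p a b lam = 1)
    (hcd : tMean q c d lam = 1) :
    tMean (p * q / (p + q)) (a * c) (b * d) lam ≤ 1 := by
  set ℓ := p * q / (p + q)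
  have hℓ : ℓ ≠ 0 := div_ne_zero (mul_ne_zero hp hq) hpq.ne'
  have hS : (1 - lam) * a ^ p + lam * b ^ p = 1 := by
    rw [← tMean_rpow_self hp ha hb h0 h1, hab, Real.one_rpow]
  have hT : (1 - lam) * c ^ q + lam * d ^ q = 1 := by
    rw [← tMean_rpow_self hq hc hd h0 h1, hcd, Real.one_rpow]
  rw [tMean_of_ne_zero hℓ]
  apply rpow_inv_le_one_of_div_le_one_div hℓ
    (weighted_rpow_pos (by positivity) (by positivity) h0 h1)
  calc ((1 - lam) * (a * c) ^ ℓ + lam * (b * d) ^ ℓ) / ℓ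
      = (1 - lam) * ((a * c) ^ ℓ / ℓ) + lam * ((b * d) ^ ℓ / ℓ) := by ring
    _ ≤ (1 - lam) * (a ^ p / p + c ^ q / q) + lam * (b ^ p / p + d ^ q / q) := by
      gcongr
      · exact young_of_add_pos hp hq hpq ha hc
      · exact young_of_add_pos hp hq hpq hb hd
    _ = ((1 - lam) * a ^ p + lam * b ^ p) / p + ((1 - lam) * c ^ q + lam * d ^ q) / q := by ring
    _ = 1 / ℓ := by rw [hS, hT]; simp only [ℓ]; field_simp; ring

theorem tMean_mul_le (hp : p ≠ 0) (hq : q ≠ 0) (hpq : 0 < p + q) (ha : 0 < a) (hb : 0 < b)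
    (hc : 0 < c) (hd : 0 < d) (h0 : 0 ≤ lam) (h1 : lam ≤ 1) :
    tMean (p * q / (p + q)) (a * c) (b * d) lam ≤ tMean p a b lam * tMean q c d lam := by
  set s := tMean p a b lam
  set t := tMean q c d lam
  have hs : 0 < s := tMean_pos ha hb h0 h1
  have ht : 0 < t := tMean_pos hc hd h0 h1
  have normalized := tMean_mul_le_one hp hq hpq (a := s⁻¹ * a) (b := s⁻¹ * b) (c := t⁻¹ * c)
    (d := t⁻¹ * d) (by positivity) (by positivity) (by positivity) (by positivity) h0 h1
    (by rw [tMean_const_mul (inv_pos.2 hs) ha hb h0 h1, inv_mul_cancel₀ hs.ne'])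
    (by rw [tMean_const_mul (inv_pos.2 ht) hc hd h0 h1, inv_mul_cancel₀ ht.ne'])
  rwa [show s⁻¹ * a * (t⁻¹ * c) = (s * t)⁻¹ * (a * c) by ring,
    show s⁻¹ * b * (t⁻¹ * d) = (s * t)⁻¹ * (b * d) by ring,
    tMean_const_mul (by positivity) (by positivity) (by positivity) h0 h1,
    inv_mul_le_iff₀ (by positivity), mul_one] at normalized

lemma min_le_tMean_mul_tMean_neg (ha : 0 < a) (hb : 0 < b) (hc : 0 < c) (hd : 0 < d)
    (h0 : 0 ≤ lam) (h1 : lam ≤ 1) :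
    min (a * c) (b * d) ≤ tMean α a b lam * tMean (-α) c d lam := by
  set m := min (a * c) (b * d)
  have hm : 0 < m := lt_min (by positivity) (by positivity)
  have hT : 0 < tMean (-α) c d lam := tMean_pos hc hd h0 h1
  calc m = m * tMean α c⁻¹ d⁻¹ lam * tMean (-α) c d lam := by
        rw [tMean_inv_inv hc hd h0 h1, mul_assoc, inv_mul_cancel₀ hT.ne', mul_one]
    _ = tMean α (m * c⁻¹) (m * d⁻¹) lam * tMean (-α) c d lam := by
        rw [tMean_const_mul hm (by positivity) (by positivity) h0 h1]
    _ ≤ tMean α a b lam * tMean (-α) c d lam := by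
        gcongr
        refine tMean_mono (by positivity) (by positivity) ?_ ?_ h0 h1
        · exact (mul_inv_le_iff₀ hc).2 (min_le_left _ _)
        · exact (mul_inv_le_iff₀ hd).2 (min_le_right _ _)

end PowerMean
section ExtendedExponent

lemma sumPQ_coe (x y : ℝ) : sumPQ x y = ((x + y : ℝ) : EReal) := by
  simp [sumPQ]

lemma ellOf_comm (p q : EReal) : ellOf p q = ellOf q p := by
  unfold ellOf
  split_ifs <;> simp_all [add_comm, mul_comm]

lemma ellOf_top_right (p : EReal) : ellOf p ⊤ = p := by
  unfold ellOf
  split_ifs <;> simp_all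

lemma ellOf_coe_eq_zero {x y : ℝ} (h : x = 0 ∨ y = 0) : ellOf x y = ((0 : ℝ) : EReal) := by
  rcases h with rfl | rfl <;> unfold ellOf <;> split_ifs <;> simp_all

lemma ellOf_coe_of_add_eq_zero {x y : ℝ} (hx : x ≠ 0) (hxy : x + y = 0) : ellOf x y = ⊥ := by
  unfold ellOf
  split_ifs <;> simp_all [← EReal.coe_add]

lemma ellOf_coe {x y : ℝ} (h : x + y ≠ 0) : ellOf x y = ((x * y / (x + y) : ℝ) : EReal) := by
  unfold ellOf
  split_ifs <;> simp_all [← EReal.coe_add]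

end ExtendedExponent

section ExtendedMean

variable {a b c d a' b' lam : ℝ}

lemma pMean_nonneg (r : EReal) (ha : 0 ≤ a) (hb : 0 ≤ b) (h0 : 0 ≤ lam) (h1 : lam ≤ 1) :
    0 ≤ pMean r a b lam := by
  have h1' : 0 ≤ 1 - lam := sub_nonneg.2 h1
  unfold pMean
  split_ifs
  · exact le_rfl
  · exact ha.trans (le_max_left a b)
  · exact le_min ha hb
  all_goals positivity

lemma pMean_top (ha : 0 < a) (hb : 0 < b) (lam : ℝ) : pMean ⊤ a b lam = max a b := by
  simp [pMean, ha.ne', hb.ne']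

lemma pMean_bot (ha : 0 < a) (hb : 0 < b) (lam : ℝ) : pMean ⊥ a b lam = min a b := by
  simp [pMean, ha.ne', hb.ne']

lemma pMean_coe (t : ℝ) (ha : 0 < a) (hb : 0 < b) (lam : ℝ) :
    pMean t a b lam = tMean t a b lam := by
  simp [pMean, tMean, ha.ne', hb.ne']

lemma pMean_mono (r : EReal) (ha : 0 < a) (hb : 0 < b) (haa : a ≤ a') (hbb : b ≤ b')
    (h0 : 0 ≤ lam) (h1 : lam ≤ 1) : pMean r a b lam ≤ pMean r a' b' lam := by
  have ha' : 0 < a' := ha.trans_le haa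
  have hb' : 0 < b' := hb.trans_le hbb
  induction r using EReal.rec with
  | bot => simpa only [pMean_bot, *] using min_le_min haa hbb
  | top => simpa only [pMean_top, *] using max_le_max haa hbb
  | coe t => simpa only [pMean_coe, *] using tMean_mono ha hb haa hbb h0 h1

lemma pMean_const_mul (r : EReal) {M : ℝ} (hM : 0 < M) (ha : 0 < a) (hb : 0 < b)
    (h0 : 0 ≤ lam) (h1 : lam ≤ 1) : pMean r (M * a) (M * b) lam = M * pMean r a b lam := by
  have hMa : 0 < M * a := mul_pos hM ha
  have hMb : 0 < M * b := mul_pos hM hb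
  induction r using EReal.rec with
  | bot => simp only [pMean_bot, *, mul_min_of_nonneg _ _ hM.le]
  | top => simp only [pMean_top, *, mul_max_of_nonneg _ _ hM.le]
  | coe t => simp only [pMean_coe, *, tMean_const_mul hM ha hb h0 h1]

lemma pMean_mul_le_mul_max (r : EReal) (ha : 0 < a) (hb : 0 < b) (hc : 0 < c) (hd : 0 < d)
    (h0 : 0 ≤ lam) (h1 : lam ≤ 1) :
    pMean r (a * c) (b * d) lam ≤ pMean r a b lam * max c d := by
  have hM : 0 < max c d := hc.trans_le (le_max_left c d)
  calc pMean r (a * c) (b * d) lam ≤ pMean r (max c d * a) (max c d * b) lam := by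
        refine pMean_mono r (by positivity) (by positivity) ?_ ?_ h0 h1
        · rw [mul_comm]; gcongr; exact le_max_left c d
        · rw [mul_comm]; gcongr; exact le_max_right c d
    _ = pMean r a b lam * max c d := by rw [pMean_const_mul r hM ha hb h0 h1, mul_comm]

lemma pMean_ellOf_top_le (p : EReal) (ha : 0 < a) (hb : 0 < b) (hc : 0 < c) (hd : 0 < d)
    (h0 : 0 ≤ lam) (h1 : lam ≤ 1) :
    pMean (ellOf p ⊤) (a * c) (b * d) lam ≤ pMean p a b lam * pMean ⊤ c d lam := by
  rw [ellOf_top_right, pMean_top hc hd]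
  exact pMean_mul_le_mul_max p ha hb hc hd h0 h1

lemma pMean_ellOf_coe_le {x y : ℝ} (hxy : 0 ≤ x + y) (ha : 0 < a) (hb : 0 < b) (hc : 0 < c)
    (hd : 0 < d) (h0 : 0 ≤ lam) (h1 : lam ≤ 1) :
    pMean (ellOf x y) (a * c) (b * d) lam ≤ pMean x a b lam * pMean y c d lam := by
  rw [pMean_coe x ha hb, pMean_coe y hc hd]
  by_cases hxy0 : x = 0 ∨ y = 0
  · have hx : 0 ≤ x := by rcases hxy0 with rfl | rfl <;> linarith
    have hy : 0 ≤ y := by rcases hxy0 with rfl | rfl <;> linarith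
    rw [ellOf_coe_eq_zero hxy0, pMean_coe 0 (by positivity) (by positivity),
      tMean_zero_mul ha hb hc hd]
    exact mul_le_mul (tMean_zero_le hx ha hb h0 h1) (tMean_zero_le hy hc hd h0 h1)
      (tMean_pos hc hd h0 h1).le (tMean_pos ha hb h0 h1).le
  obtain ⟨hx, hy⟩ := not_or.1 hxy0
  rcases hxy.eq_or_lt with hxy | hxy
  · obtain rfl : y = -x := by linarith
    rw [ellOf_coe_of_add_eq_zero hx hxy.symm, pMean_bot (by positivity) (by positivity)]
    exact min_le_tMean_mul_tMean_neg ha hb hc hd h0 h1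
  · rw [ellOf_coe hxy.ne', pMean_coe _ (by positivity) (by positivity)]
    exact tMean_mul_le hx hy hxy ha hb hc hd h0 h1

theorem pMean_ellOf_le_of_pos {p q : EReal} (hpq : 0 ≤ sumPQ p q) (ha : 0 < a) (hb : 0 < b)
    (hc : 0 < c) (hd : 0 < d) (h0 : 0 ≤ lam) (h1 : lam ≤ 1) :
    pMean (ellOf p q) (a * c) (b * d) lam ≤ pMean p a b lam * pMean q c d lam := by
  by_cases hq : q = ⊤
  · subst hq
    exact pMean_ellOf_top_le p ha hb hc hd h0 h1
  by_cases hp : p = ⊤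
  · subst hp
    rw [ellOf_comm, mul_comm a, mul_comm b, mul_comm (pMean ⊤ a b lam)]
    exact pMean_ellOf_top_le q hc hd ha hb h0 h1
  have hp' : p ≠ ⊥ := by rintro rfl; simp [sumPQ, hq] at hpq
  have hq' : q ≠ ⊥ := by rintro rfl; simp [sumPQ, hp] at hpq
  lift p to ℝ using ⟨hp, hp'⟩
  lift q to ℝ using ⟨hq, hq'⟩
  rw [sumPQ_coe, EReal.coe_nonneg] at hpq
  exact pMean_ellOf_coe_le hpq ha hb hc hd h0 h1

end ExtendedMean

theorem stmt1 (p q : EReal) (hpq : 0 ≤ sumPQ p q)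
    (a b c d lam : ℝ) (ha : 0 ≤ a) (hb : 0 ≤ b) (hc : 0 ≤ c) (hd : 0 ≤ d)
    (hlam : lam ∈ Set.Icc (0:ℝ) 1) :
    pMean (ellOf p q) (a * c) (b * d) lam ≤ pMean p a b lam * pMean q c d lam := by
  obtain ⟨h0, h1⟩ := hlam
  by_cases hzero : a * c * (b * d) = 0
  · rw [show pMean (ellOf p q) (a * c) (b * d) lam = 0 from if_pos hzero]
    exact mul_nonneg (pMean_nonneg p ha hb h0 h1) (pMean_nonneg q hc hd h0 h1)
  obtain ⟨⟨ha0, hc0⟩, hb0, hd0⟩ := by simpa [not_or] using hzero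
  exact pMean_ellOf_le_of_pos hpq (ha.lt_of_ne' ha0) (hb.lt_of_ne' hb0) (hc.lt_of_ne' hc0)
    (hd.lt_of_ne' hd0) h0 h1
end

section
/- Let E ⊂ ℝⁿ × (0,∞), α ∈ ℝ \ {0}, and define ω_α(x,t) = (x/t^α, 1/t^α). Then E is α-parabolically convex if and only if the image ω_α(E) ⊂ ℝⁿ × (0,∞) is convex. -/
/-!
Write `s = t ^ α`. The substitution `(x, t) ↦ (x, t ^ α)` turns `α`-parabolic convexity into
ordinary convexity, and `ω_α` is this substitution followed by the perspective map
`(x, s) ↦ (x / s, 1 / s)`. The perspective map is an involution of `V × (0, ∞)` which maps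
segments onto segments (it is the restriction of a projective transformation), so it preserves
convexity in both directions.
-/

open Set MeasureTheory

section ProductWithReals

variable {V : Type*} [AddCommGroup V] [Module ℝ V]

noncomputable def perspective (z : V × ℝ) : V × ℝ := (z.2⁻¹ • z.1, z.2⁻¹)

lemma perspective_perspective {z : V × ℝ} (hz : z.2 ≠ 0) : perspective (perspective z) = z := by
  simp [perspective, smul_smul, hz]

lemma perspective_image_perspective_image {F : Set (V × ℝ)} (hF : ∀ z ∈ F, 0 < z.2) :
    perspective '' (perspective '' F) = F := by
  rw [image_image]
  exact (image_congr fun z hz ↦ perspective_perspective (hF z hz).ne').trans (image_id F)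

lemma perspective_snd_pos {F : Set (V × ℝ)} (hF : ∀ z ∈ F, 0 < z.2) :
    ∀ z ∈ perspective '' F, 0 < z.2 := by
  rintro _ ⟨z, hz, rfl⟩
  exact inv_pos.2 (hF z hz)

theorem Convex.perspective_image {F : Set (V × ℝ)} (hF : ∀ z ∈ F, 0 < z.2) (hconv : Convex ℝ F) :
    Convex ℝ (perspective '' F) := by
  rintro _ ⟨p, hp, rfl⟩ _ ⟨q, hq, rfl⟩ a b ha hb hab
  have hp₀ := hF p hp
  have hq₀ := hF q hq
  set T := a * p.2⁻¹ + b * q.2⁻¹ with hT_def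
  have hT : 0 < T := by
    rcases ha.eq_or_lt with rfl | ha
    · rw [zero_add] at hab
      simp [hT_def, hab, hq₀]
    · positivity
  -- The preimage of `a • perspective p + b • perspective q` lies on the segment `[p, q]`.
  refine ⟨(a * p.2⁻¹ / T) • p + (b * q.2⁻¹ / T) • q,
    hconv hp hq (by positivity) (by positivity) (by rw [← add_div, div_self hT.ne']), ?_⟩
  have hsnd : ((a * p.2⁻¹ / T) • p + (b * q.2⁻¹ / T) • q).2 = T⁻¹ := by
    simp only [Prod.snd_add, Prod.smul_snd, smul_eq_mul]
    field_simp
    exact hab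
  rw [perspective, hsnd, inv_inv]
  refine Prod.ext ?_ rfl
  simp only [perspective, Prod.fst_add, Prod.smul_fst, smul_add, smul_smul]
  congr 2 <;> field_simp

theorem convex_perspective_image_iff {F : Set (V × ℝ)} (hF : ∀ z ∈ F, 0 < z.2) :
    Convex ℝ (perspective '' F) ↔ Convex ℝ F := by
  refine ⟨fun h ↦ ?_, Convex.perspective_image hF⟩
  rw [← perspective_image_perspective_image hF]
  exact h.perspective_image (perspective_snd_pos hF)

def ParabolicallyConvex (α : ℝ) (E : Set (V × ℝ)) : Prop :=
  ∀ z₀ ∈ E, ∀ z₁ ∈ E, ∀ lam ∈ Icc (0:ℝ) 1,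
    ((1 - lam) • z₀.1 + lam • z₁.1, ((1 - lam) * z₀.2 ^ α + lam * z₁.2 ^ α) ^ α⁻¹) ∈ E

theorem parabolicallyConvex_iff_convex_image_rpow {E : Set (V × ℝ)} (hE : ∀ z ∈ E, 0 < z.2)
    {α : ℝ} (hα : α ≠ 0) :
    ParabolicallyConvex α E ↔ Convex ℝ ((fun z : V × ℝ ↦ (z.1, z.2 ^ α)) '' E) := by
  constructor
  · rintro h _ ⟨p, hp, rfl⟩ _ ⟨q, hq, rfl⟩ a b ha hb hab
    obtain rfl : a = 1 - b := eq_sub_of_add_eq hab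
    refine ⟨_, h p hp q hq b ⟨hb, by linarith⟩, ?_⟩
    have hS : 0 ≤ (1 - b) * p.2 ^ α + b * q.2 ^ α := by
      have := hE p hp
      have := hE q hq
      positivity
    simp [Real.rpow_inv_rpow hS hα]
  · rintro h p hp q hq lam ⟨h₀, h₁⟩
    obtain ⟨w, hw, hw_eq⟩ :=
      h ⟨p, hp, rfl⟩ ⟨q, hq, rfl⟩ (sub_nonneg.2 h₁) h₀ (sub_add_cancel 1 lam)
    simp only [Prod.smul_mk, Prod.mk_add_mk, smul_eq_mul, Prod.mk.injEq] at hw_eq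
    convert hw using 1
    refine Prod.ext hw_eq.1.symm ?_
    rw [← hw_eq.2, Real.rpow_rpow_inv (hE w hw).le hα]

end ProductWithReals

theorem stmt8 {n : ℕ} (E : Set (EuclideanSpace ℝ (Fin n) × ℝ))
    (hE : ∀ z ∈ E, 0 < z.2) (α : ℝ) (hα : α ≠ 0) :
    (∀ z₀ ∈ E, ∀ z₁ ∈ E, ∀ lam ∈ Set.Icc (0:ℝ) 1,
        ((1 - lam) • z₀.1 + lam • z₁.1,
          ((1 - lam) * z₀.2 ^ α + lam * z₁.2 ^ α) ^ α⁻¹) ∈ E) ↔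
      Convex ℝ ((fun z : EuclideanSpace ℝ (Fin n) × ℝ =>
        ((z.2 ^ α)⁻¹ • z.1, (z.2 ^ α)⁻¹)) '' E) := by
  set ψ := fun z : EuclideanSpace ℝ (Fin n) × ℝ ↦ (z.1, z.2 ^ α)
  have hψE : ∀ z ∈ ψ '' E, 0 < z.2 := by
    rintro _ ⟨z, hz, rfl⟩
    exact Real.rpow_pos_of_pos (hE z hz) α
  change _ ↔ Convex ℝ ((fun z ↦ perspective (ψ z)) '' E)
  rw [← image_image, convex_perspective_image_iff hψE]
  exact parabolicallyConvex_iff_convex_image_rpow hE hα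
end

section
/- Let A be a convex set in ℝⁿ, f : A → [0,∞) a p-concave function with p ∈ ℝ \ {0}, α ∈ ℝ \ {0}, Â_α = {(x,t) ∈ ℝⁿ×(0,∞) | x/t^α ∈ A}, and f̂(x,t) = t^{α/p} f(x/t^α). Then f̂ is α-parabolically p-concave on Â_α: for all (x₀,t₀), (x₁,t₁) ∈ Â_α and λ ∈ [0,1], f̂((1-λ)x₀+λx₁, M_α(t₀,t₁;λ)) ≥ M_p(f̂(x₀,t₀), f̂(x₁,t₁); λ). -/
open Set MeasureTheory

lemma pMean_coe_of_mul_ne_zero {p : ℝ} (hp : p ≠ 0) {a b : ℝ} (hab : a * b ≠ 0) (lam : ℝ) :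
    pMean (p : EReal) a b lam = ((1 - lam) * a ^ p + lam * b ^ p) ^ p⁻¹ := by
  simp [pMean, hab, hp]

lemma convexCombination_pos {u v lam : ℝ} (hu : 0 < u) (hv : 0 < v)
    (hlam : lam ∈ Icc (0 : ℝ) 1) : 0 < (1 - lam) * u + lam * v := by
  obtain ⟨hl0, hl1⟩ := hlam
  rcases le_total u v with h | h <;> nlinarith

lemma mul_div_convexCombination_mem_Icc {u v lam : ℝ} (hu : 0 < u) (hv : 0 < v)
    (hlam : lam ∈ Icc (0 : ℝ) 1) :
    lam * v / ((1 - lam) * u + lam * v) ∈ Icc (0 : ℝ) 1 := by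
  have hS := convexCombination_pos hu hv hlam
  obtain ⟨hl0, hl1⟩ := hlam
  refine ⟨by positivity, (div_le_one hS).2 ?_⟩
  nlinarith

lemma pMean_rpow_inv_mul {p : ℝ} (hp : p ≠ 0) {u v a b lam : ℝ} (hu : 0 < u) (hv : 0 < v)
    (ha : 0 ≤ a) (hb : 0 ≤ b) (hlam : lam ∈ Icc (0 : ℝ) 1) :
    pMean (p : EReal) (u ^ p⁻¹ * a) (v ^ p⁻¹ * b) lam =
      ((1 - lam) * u + lam * v) ^ p⁻¹ *
        pMean (p : EReal) a b (lam * v / ((1 - lam) * u + lam * v)) := by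
  set S := (1 - lam) * u + lam * v
  set μ := lam * v / S
  obtain ⟨hμ0, hμ1⟩ := mul_div_convexCombination_mem_Icc hu hv hlam
  have hS : 0 < S := convexCombination_pos hu hv hlam
  by_cases hab : a * b = 0
  · have hab' : u ^ p⁻¹ * a * (v ^ p⁻¹ * b) = 0 := by rw [mul_mul_mul_comm, hab, mul_zero]
    simp [pMean, hab, hab']
  have ha' : 0 < a := ha.lt_of_ne (left_ne_zero_of_mul hab).symm
  have hb' : 0 < b := hb.lt_of_ne (right_ne_zero_of_mul hab).symm
  rw [pMean_coe_of_mul_ne_zero hp (by positivity), pMean_coe_of_mul_ne_zero hp hab,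
    Real.mul_rpow (by positivity) ha, Real.mul_rpow (by positivity) hb,
    Real.rpow_inv_rpow hu.le hp, Real.rpow_inv_rpow hv.le hp,
    ← Real.mul_rpow hS.le (by have := sub_nonneg.2 hμ1; positivity)]
  congr 1
  simp only [μ]
  field_simp
  ring

lemma inv_smul_convexCombination {E : Type*} [AddCommGroup E] [Module ℝ E] {u v lam : ℝ}
    (hu : u ≠ 0) (hv : v ≠ 0) (hS : (1 - lam) * u + lam * v ≠ 0) (x₀ x₁ : E) :
    ((1 - lam) * u + lam * v)⁻¹ • ((1 - lam) • x₀ + lam • x₁) =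
      (1 - lam * v / ((1 - lam) * u + lam * v)) • (u⁻¹ • x₀) +
        (lam * v / ((1 - lam) * u + lam * v)) • (v⁻¹ • x₁) := by
  simp only [smul_add, smul_smul]
  congr 2
  · field_simp
    ring
  · field_simp

theorem pMean_perspective_le {E : Type*} [AddCommGroup E] [Module ℝ E] {A : Set E} {p : ℝ}
    (hp : p ≠ 0) {f : E → ℝ} (hf0 : ∀ x ∈ A, 0 ≤ f x)
    (hconc : ∀ x₀ ∈ A, ∀ x₁ ∈ A, ∀ lam ∈ Icc (0 : ℝ) 1,
        pMean (p : EReal) (f x₀) (f x₁) lam ≤ f ((1 - lam) • x₀ + lam • x₁))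
    {x₀ x₁ : E} {u v lam : ℝ} (hu : 0 < u) (hv : 0 < v) (h₀ : u⁻¹ • x₀ ∈ A)
    (h₁ : v⁻¹ • x₁ ∈ A) (hlam : lam ∈ Icc (0 : ℝ) 1) :
    pMean (p : EReal) (u ^ p⁻¹ * f (u⁻¹ • x₀)) (v ^ p⁻¹ * f (v⁻¹ • x₁)) lam ≤
      ((1 - lam) * u + lam * v) ^ p⁻¹ *
        f (((1 - lam) * u + lam * v)⁻¹ • ((1 - lam) • x₀ + lam • x₁)) := by
  have hS := convexCombination_pos hu hv hlam
  rw [pMean_rpow_inv_mul hp hu hv (hf0 _ h₀) (hf0 _ h₁) hlam,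
    inv_smul_convexCombination hu.ne' hv.ne' hS.ne']
  exact mul_le_mul_of_nonneg_left
    (hconc _ h₀ _ h₁ _ (mul_div_convexCombination_mem_Icc hu hv hlam)) (by positivity)

lemma tMean_nonneg {α : ℝ} (hα : α ≠ 0) {t₀ t₁ lam : ℝ} (ht₀ : 0 < t₀) (ht₁ : 0 < t₁)
    (hlam : lam ∈ Icc (0 : ℝ) 1) : 0 ≤ tMean α t₀ t₁ lam := by
  obtain ⟨hl0, hl1⟩ := hlam
  rw [tMean, if_neg hα]
  have := Real.rpow_pos_of_pos ht₀ α
  have := Real.rpow_pos_of_pos ht₁ α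
  positivity

lemma tMean_rpow {α : ℝ} (hα : α ≠ 0) {t₀ t₁ lam : ℝ} (ht₀ : 0 < t₀) (ht₁ : 0 < t₁)
    (hlam : lam ∈ Icc (0 : ℝ) 1) :
    tMean α t₀ t₁ lam ^ α = (1 - lam) * t₀ ^ α + lam * t₁ ^ α := by
  obtain ⟨hl0, hl1⟩ := hlam
  rw [tMean, if_neg hα]
  have := Real.rpow_pos_of_pos ht₀ α
  have := Real.rpow_pos_of_pos ht₁ α
  exact Real.rpow_inv_rpow (by positivity) hα

theorem stmt11_general {n : ℕ} (A : Set (EuclideanSpace ℝ (Fin n)))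
    (p α : ℝ) (hp : p ≠ 0) (hα : α ≠ 0)
    (f : EuclideanSpace ℝ (Fin n) → ℝ) (hf0 : ∀ x ∈ A, 0 ≤ f x)
    (hconc : ∀ x₀ ∈ A, ∀ x₁ ∈ A, ∀ lam ∈ Set.Icc (0:ℝ) 1,
        pMean (p : EReal) (f x₀) (f x₁) lam ≤ f ((1 - lam) • x₀ + lam • x₁)) :
    ∀ x₀ x₁ : EuclideanSpace ℝ (Fin n), ∀ t₀ t₁ : ℝ, 0 < t₀ → 0 < t₁ →
      (t₀ ^ α)⁻¹ • x₀ ∈ A → (t₁ ^ α)⁻¹ • x₁ ∈ A → ∀ lam ∈ Set.Icc (0:ℝ) 1,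
      pMean (p : EReal)
          (t₀ ^ (α / p) * f ((t₀ ^ α)⁻¹ • x₀))
          (t₁ ^ (α / p) * f ((t₁ ^ α)⁻¹ • x₁)) lam ≤
        (tMean α t₀ t₁ lam) ^ (α / p) *
          f (((tMean α t₀ t₁ lam) ^ α)⁻¹ • ((1 - lam) • x₀ + lam • x₁)) := by
  intro x₀ x₁ t₀ t₁ ht₀ ht₁ h₀ h₁ lam hlam
  have rpow_div : ∀ t : ℝ, 0 ≤ t → t ^ (α / p) = (t ^ α) ^ p⁻¹ := fun t ht => by
    rw [div_eq_mul_inv, Real.rpow_mul ht]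
  rw [rpow_div t₀ ht₀.le, rpow_div t₁ ht₁.le, rpow_div _ (tMean_nonneg hα ht₀ ht₁ hlam),
    tMean_rpow hα ht₀ ht₁ hlam]
  exact pMean_perspective_le hp hf0 hconc (Real.rpow_pos_of_pos ht₀ α)
    (Real.rpow_pos_of_pos ht₁ α) h₀ h₁ hlam

theorem stmt11 {n : ℕ} (A : Set (EuclideanSpace ℝ (Fin n))) (hA : Convex ℝ A)
    (p α : ℝ) (hp : p ≠ 0) (hα : α ≠ 0)
    (f : EuclideanSpace ℝ (Fin n) → ℝ) (hf0 : ∀ x ∈ A, 0 ≤ f x)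
    (hconc : ∀ x₀ ∈ A, ∀ x₁ ∈ A, ∀ lam ∈ Set.Icc (0:ℝ) 1,
        pMean (p : EReal) (f x₀) (f x₁) lam ≤ f ((1 - lam) • x₀ + lam • x₁)) :
    ∀ x₀ x₁ : EuclideanSpace ℝ (Fin n), ∀ t₀ t₁ : ℝ, 0 < t₀ → 0 < t₁ →
      (t₀ ^ α)⁻¹ • x₀ ∈ A → (t₁ ^ α)⁻¹ • x₁ ∈ A → ∀ lam ∈ Set.Icc (0:ℝ) 1,
      pMean (p : EReal)
          (t₀ ^ (α / p) * f ((t₀ ^ α)⁻¹ • x₀))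
          (t₁ ^ (α / p) * f ((t₁ ^ α)⁻¹ • x₁)) lam ≤
        (tMean α t₀ t₁ lam) ^ (α / p) *
          f (((tMean α t₀ t₁ lam) ^ α)⁻¹ • ((1 - lam) • x₀ + lam • x₁)) :=
  stmt11_general A p α hp hα f hf0 hconc
end

section
/- Let Ω be a bounded convex set in ℝⁿ with non-empty interior, K = closure(Ω), s ∈ (0,1], μ ∈ [0,∞), and v ∈ Sⁿ⁻¹, with (s,μ) ≠ (1,0). Then the set Ω \ (sK − μv) has non-empty interior, where sK − μv = {s y − μ v | y ∈ K}. -/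
open Set MeasureTheory

/-!
Write `K = closure Ω` and `T = sK - μv`, a compact set. If `Ω \ T` had empty interior, then
`interior Ω ⊆ T`, hence `K = closure (interior Ω) ⊆ T`. For any linear functional `ℓ`,
comparing the maximum and the minimum of `ℓ` on `K` with the same extrema on `sK - μv ⊇ K`
forces `(1 - s) ℓ x = -μ ℓ v` for every `x ∈ K`. Taking `ℓ = ⟪v, ·⟫` and two points of `K`
differing by a positive multiple of `v` gives `s = 1`, and then `μ = 0`.
-/

theorem IsClosed.interior_diff {X : Type*} [TopologicalSpace X] {s t : Set X} (ht : IsClosed t) :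
    interior (s \ t) = interior s \ t := by
  rw [sdiff_eq, interior_inter, ht.isOpen_compl.interior_eq, sdiff_eq]

theorem IsCompact.one_sub_mul_eq_of_subset_image_smul_add {E : Type*} [AddCommGroup E]
    [Module ℝ E] [TopologicalSpace E] {K : Set E} (hK : IsCompact K) {s : ℝ} (hs₀ : 0 ≤ s)
    (hs₁ : s ≤ 1) {w : E} (hKw : K ⊆ (fun y => s • y + w) '' K) (ℓ : E →L[ℝ] ℝ) :
    ∀ x ∈ K, (1 - s) * ℓ x = ℓ w := by
  intro x hx
  obtain ⟨a, haK, ha⟩ := hK.exists_isMaxOn ⟨x, hx⟩ ℓ.continuous.continuousOn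
  obtain ⟨b, hbK, hb⟩ := hK.exists_isMinOn ⟨x, hx⟩ ℓ.continuous.continuousOn
  have hpreimage : ∀ z ∈ K, ∃ y ∈ K, ℓ z = s * ℓ y + ℓ w := by
    rintro z hz
    obtain ⟨y, hy, rfl⟩ := hKw hz
    exact ⟨y, hy, by simp⟩
  obtain ⟨ya, hya, hℓa⟩ := hpreimage a haK
  obtain ⟨yb, hyb, hℓb⟩ := hpreimage b hbK
  have hmax : (1 - s) * ℓ a ≤ ℓ w := by linarith [mul_le_mul_of_nonneg_left (ha hya) hs₀]
  have hmin : ℓ w ≤ (1 - s) * ℓ b := by linarith [mul_le_mul_of_nonneg_left (hb hyb) hs₀]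
  have hxa := mul_le_mul_of_nonneg_left (ha hx) (sub_nonneg.2 hs₁)
  have hbx := mul_le_mul_of_nonneg_left (hb hx) (sub_nonneg.2 hs₁)
  linarith

theorem exists_pos_add_smul_mem_of_mem_nhds {E : Type*} [AddCommGroup E] [Module ℝ E]
    [TopologicalSpace E] [IsTopologicalAddGroup E] [ContinuousSMul ℝ E] {U : Set E} {p : E}
    (hU : U ∈ nhds p) (v : E) : ∃ t : ℝ, 0 < t ∧ p + t • v ∈ U := by
  have hcont : Filter.Tendsto (fun t : ℝ => p + t • v) (nhds 0) (nhds p) :=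
    (by fun_prop : Continuous fun t : ℝ => p + t • v).tendsto' 0 p (by simp)
  have hright : ∀ᶠ t in nhdsWithin (0 : ℝ) (Ioi 0), 0 < t ∧ p + t • v ∈ U :=
    eventually_mem_nhdsWithin.and ((hcont.eventually hU).filter_mono nhdsWithin_le_nhds)
  exact hright.exists

theorem stmt14_general {n : ℕ} (Ω : Set (EuclideanSpace ℝ (Fin n))) (hΩ : Convex ℝ Ω)
    (hb : Bornology.IsBounded Ω) (hint : (interior Ω).Nonempty)
    (s μ : ℝ) (hs : s ∈ Set.Ioc (0:ℝ) 1)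
    (v : EuclideanSpace ℝ (Fin n)) (hv : ‖v‖ = 1) (hsμ : (s, μ) ≠ (1, 0)) :
    (interior (Ω \ ((fun y => s • y - μ • v) '' closure Ω))).Nonempty := by
  have hT : IsClosed ((fun y => s • y - μ • v) '' closure Ω) :=
    (hb.isCompact_closure.image (by fun_prop)).isClosed
  rw [hT.interior_diff]
  refine nonempty_of_not_subset fun hsub => ?_
  have hKT : closure Ω ⊆ (fun y => s • y + -(μ • v)) '' closure Ω := by
    simp only [← sub_eq_add_neg]
    exact (hΩ.closure_interior_eq_closure_of_nonempty_interior hint).symm.subset.trans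
      (closure_minimal hsub hT)
  obtain ⟨p, hp⟩ := hint
  obtain ⟨t, ht, hpt⟩ := exists_pos_add_smul_mem_of_mem_nhds (isOpen_interior.mem_nhds hp) v
  have hconst := hb.isCompact_closure.one_sub_mul_eq_of_subset_image_smul_add hs.1.le hs.2 hKT
    (innerSL ℝ v)
  have hℓp := hconst p (subset_closure (interior_subset hp))
  have hℓpt := hconst _ (subset_closure (interior_subset hpt))
  have hvv : inner ℝ v v = (1 : ℝ) := by rw [real_inner_self_eq_norm_sq, hv, one_pow]
  simp only [innerSL_apply_apply, inner_add_right, inner_neg_right, real_inner_smul_right,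
    hvv] at hℓp hℓpt
  have hs_one : s = 1 := by nlinarith
  subst hs_one
  exact hsμ (by simp only [Prod.mk.injEq, true_and]; linarith)

theorem stmt14 {n : ℕ} (Ω : Set (EuclideanSpace ℝ (Fin n))) (hΩ : Convex ℝ Ω)
    (hb : Bornology.IsBounded Ω) (hint : (interior Ω).Nonempty)
    (s μ : ℝ) (hs : s ∈ Set.Ioc (0:ℝ) 1) (hμ : 0 ≤ μ)
    (v : EuclideanSpace ℝ (Fin n)) (hv : ‖v‖ = 1) (hsμ : (s, μ) ≠ (1, 0)) :
    (interior (Ω \ ((fun y => s • y - μ • v) '' closure Ω))).Nonempty :=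
  stmt14_general Ω hΩ hb hint s μ hs v hv hsμ
end

section
/- Let K be a compact convex subset of ℝⁿ, α ∈ ℝ \ {0}, x₀, x₁ ∈ ℝⁿ, t₀, t₁ ∈ (0,∞), λ ∈ (0,1), and define K' = (t₁^α((λ/t₀^α + (1−λ)/t₁^α)K − λ(x₀/t₀^α − x₁/t₁^α))) ∩ (t₀^α((λ/t₀^α + (1−λ)/t₁^α)K + (1−λ)(x₀/t₀^α − x₁/t₁^α))). Then y ∈ K' if and only if there exist y₀, y₁ ∈ K with (1−λ)y₀ + λy₁ = y and (x₀−y₀)/t₀^α = (x₁−y₁)/t₁^α. -/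
open Set MeasureTheory

/-! Both conditions on `(y₀, y₁)` are linear. Given them, `y` is the image of `y₀` under the first
homothety and of `y₁` under the second; conversely, these two homotheties are invertible since
`(1 - λ) t₀^α + λ t₁^α ≠ 0`, so `y` determines `y₀` and `y₁`, and eliminating the shift vector
`t₀^{-α} x₀ - t₁^{-α} x₁` from the two equations gives back both conditions. -/

section

variable {𝕜 V : Type*} [Field 𝕜] [AddCommGroup V] [Module 𝕜 V]

theorem homothety_eq_and_homothety_eq_iff {a b lam : 𝕜} (ha : a ≠ 0) (hb : b ≠ 0)
    (hs : (1 - lam) * a + lam * b ≠ 0) (x₀ x₁ y₀ y₁ y : V) :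
    (b • ((lam / a + (1 - lam) / b) • y₀ - lam • (a⁻¹ • x₀ - b⁻¹ • x₁)) = y ∧
      a • ((lam / a + (1 - lam) / b) • y₁ + (1 - lam) • (a⁻¹ • x₀ - b⁻¹ • x₁)) = y) ↔
      ((1 - lam) • y₀ + lam • y₁ = y ∧ a⁻¹ • (x₀ - y₀) = b⁻¹ • (x₁ - y₁)) := by
  constructor
  · rintro ⟨h₀, h₁⟩
    -- an atomic denominator `s`, so that `field_simp` can use `hs`
    generalize hs_def : (1 - lam) * a + lam * b = s at hs
    constructor
    · linear_combination (norm := skip) (a * (1 - lam) / s) • h₀ + (b * lam / s) • h₁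
      match_scalars <;> field_simp <;> subst hs_def <;> ring
    · linear_combination (norm := skip) s⁻¹ • (h₁ - h₀)
      match_scalars <;> field_simp <;> subst hs_def <;> ring
  · rintro ⟨hy, hrel⟩
    constructor
    · linear_combination (norm := skip) hy - (b * lam) • hrel
      match_scalars <;> field_simp <;> ring
    · linear_combination (norm := skip) hy + (a * (1 - lam)) • hrel
      match_scalars <;> field_simp <;> ring

end

theorem stmt16_general {n : ℕ} (K : Set (EuclideanSpace ℝ (Fin n)))
    (α : ℝ) (x₀ x₁ : EuclideanSpace ℝ (Fin n)) (t₀ t₁ : ℝ)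
    (ht₀ : 0 < t₀) (ht₁ : 0 < t₁) (lam : ℝ) (hlam : lam ∈ Set.Ioo (0:ℝ) 1)
    (y : EuclideanSpace ℝ (Fin n)) :
    (y ∈ ((fun z => (t₁ ^ α) •
            ((lam / t₀ ^ α + (1 - lam) / t₁ ^ α) • z -
              lam • ((t₀ ^ α)⁻¹ • x₀ - (t₁ ^ α)⁻¹ • x₁))) '' K) ∩
          ((fun z => (t₀ ^ α) •
            ((lam / t₀ ^ α + (1 - lam) / t₁ ^ α) • z +
              (1 - lam) • ((t₀ ^ α)⁻¹ • x₀ - (t₁ ^ α)⁻¹ • x₁))) '' K)) ↔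
      ∃ y₀ ∈ K, ∃ y₁ ∈ K, (1 - lam) • y₀ + lam • y₁ = y ∧
        (t₀ ^ α)⁻¹ • (x₀ - y₀) = (t₁ ^ α)⁻¹ • (x₁ - y₁) := by
  obtain ⟨hlam₀, hlam₁⟩ := hlam
  have hA : 0 < t₀ ^ α := Real.rpow_pos_of_pos ht₀ α
  have hB : 0 < t₁ ^ α := Real.rpow_pos_of_pos ht₁ α
  have hs : (1 - lam) * t₀ ^ α + lam * t₁ ^ α ≠ 0 := by nlinarith
  have key := homothety_eq_and_homothety_eq_iff hA.ne' hB.ne' hs x₀ x₁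
  simp only [mem_inter_iff, mem_image]
  constructor
  · rintro ⟨⟨y₀, hy₀, h₀⟩, y₁, hy₁, h₁⟩
    exact ⟨y₀, hy₀, y₁, hy₁, (key y₀ y₁ y).1 ⟨h₀, h₁⟩⟩
  · rintro ⟨y₀, hy₀, y₁, hy₁, h⟩
    obtain ⟨h₀, h₁⟩ := (key y₀ y₁ y).2 h
    exact ⟨⟨y₀, hy₀, h₀⟩, y₁, hy₁, h₁⟩

theorem stmt16 {n : ℕ} (K : Set (EuclideanSpace ℝ (Fin n)))
    (hKc : IsCompact K) (hKconv : Convex ℝ K)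
    (α : ℝ) (hα : α ≠ 0) (x₀ x₁ : EuclideanSpace ℝ (Fin n)) (t₀ t₁ : ℝ)
    (ht₀ : 0 < t₀) (ht₁ : 0 < t₁) (lam : ℝ) (hlam : lam ∈ Set.Ioo (0:ℝ) 1)
    (y : EuclideanSpace ℝ (Fin n)) :
    (y ∈ ((fun z => (t₁ ^ α) •
            ((lam / t₀ ^ α + (1 - lam) / t₁ ^ α) • z -
              lam • ((t₀ ^ α)⁻¹ • x₀ - (t₁ ^ α)⁻¹ • x₁))) '' K) ∩
          ((fun z => (t₀ ^ α) •
            ((lam / t₀ ^ α + (1 - lam) / t₁ ^ α) • z +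
              (1 - lam) • ((t₀ ^ α)⁻¹ • x₀ - (t₁ ^ α)⁻¹ • x₁))) '' K)) ↔
      ∃ y₀ ∈ K, ∃ y₁ ∈ K, (1 - lam) • y₀ + lam • y₁ = y ∧
        (t₀ ^ α)⁻¹ • (x₀ - y₀) = (t₁ ^ α)⁻¹ • (x₁ - y₁) :=
  stmt16_general K α x₀ x₁ t₀ t₁ ht₀ ht₁ lam hlam y
end
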